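/- Let μ ∈ a*_Θ be such that ρ_Θ + μ is regular and integral. Then ρ_Θ + μ is dominant if and only if ⟨μ,γ⟩ > 0 for all γ ∈ Σ_Θ⁺. -/

import Mathlib

open Pointwise
open scoped RealInnerProductSpace

noncomputable section

variable {V : Type*} [NormedAddCommGroup V] [InnerProductSpace ℝ V] [FiniteDimensional ℝ V]

/-- The coroot `α∨ = 2α/⟨α,α⟩`. -/
def coroot (α : V) : V := (2 / ⟪α, α⟫) • α

/-- The reflection `s_α` in the root `α`, as a linear automorphism of `V`
(the orthogonal reflection fixing the hyperplane orthogonal to `α`). -/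
def rootRefl (α : V) : V ≃ₗ[ℝ] V :=
  (Submodule.reflection (Submodule.span ℝ {α})ᗮ).toLinearEquiv

/-- `w` is the longest element of the subgroup `H` with respect to a positive system `P`:
it lies in `H` and maps `P` onto `-P`. -/
def IsLongest (H : Subgroup (V ≃ₗ[ℝ] V)) (P : Set V) (w : V ≃ₗ[ℝ] V) : Prop :=
  w ∈ H ∧ ⇑w '' P = (fun x => -x) '' P

open Classical in
/-- The longest element of `H` with respect to `P` (junk value `1` if there is none). -/
def longest (H : Subgroup (V ≃ₗ[ℝ] V)) (P : Set V) : V ≃ₗ[ℝ] V :=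
  if h : ∃ w, IsLongest H P w then h.choose else 1

/-- The parabolic subgroup `W_Θ` generated by the reflections `s_α`, `α ∈ Θ`. -/
def parabolicSub (Θ : Set V) : Subgroup (V ≃ₗ[ℝ] V) :=
  Subgroup.closure {g | ∃ α ∈ Θ, g = rootRefl α}

/-- `a*_Θ`, the orthogonal complement of the span of `Θ`. -/
def aTheta (Θ : Set V) : Submodule ℝ V := (Submodule.span ℝ Θ)ᗮ

/-- The orthogonal projection onto `a*_Θ`; `resTheta Θ α` is `α|_{a_Θ}`. -/
def resTheta (Θ : Set V) (v : V) : V := (Submodule.orthogonalProjectionOnto (aTheta Θ) v : V)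

/-- The set of indecomposable elements of `P`: the base of a positive system `P`. -/
def baseOf (P : Set V) : Set V := {β ∈ P | ¬ ∃ γ ∈ P, ∃ δ ∈ P, β = γ + δ}

/-- Data of a root system with a chosen positive system `Δ⁺` and base `Π`. -/
structure RootData (V : Type*) [NormedAddCommGroup V] [InnerProductSpace ℝ V] where
  roots : Set V
  pos : Set V
  base : Set V

namespace RootData

variable (R : RootData V)

/-- The axioms: `Δ` is a finite reduced crystallographic root system spanning `V`,
`Δ⁺` is a positive system with base `Π`. -/
structure IsRootSystem : Prop where
  finite : R.roots.Finite
  span_eq_top : Submodule.span ℝ R.roots = ⊤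
  zero_not_mem : (0 : V) ∉ R.roots
  reduced : ∀ α ∈ R.roots, ∀ t : ℝ, t • α ∈ R.roots → t = 1 ∨ t = -1
  reflect_mem : ∀ α ∈ R.roots, ∀ β ∈ R.roots, rootRefl α β ∈ R.roots
  crystallographic : ∀ α ∈ R.roots, ∀ β ∈ R.roots, ∃ z : ℤ, (z : ℝ) = ⟪β, coroot α⟫
  pos_subset : R.pos ⊆ R.roots
  pos_iff_neg_not_mem : ∀ α ∈ R.roots, (α ∈ R.pos ↔ -α ∉ R.pos)
  base_subset : R.base ⊆ R.pos
  base_indep : LinearIndependent ℝ ((↑) : R.base → V)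
  pos_mem_closure : ∀ β ∈ R.pos, β ∈ AddSubmonoid.closure R.base

/-- The Weyl group of `Δ`, generated by the reflections in the roots. -/
def weylGroup : Subgroup (V ≃ₗ[ℝ] V) :=
  Subgroup.closure {g | ∃ α ∈ R.roots, g = rootRefl α}

/-- The set `S` of simple reflections `s_α`, `α ∈ Π`. -/
def simpleRefls : Set (V ≃ₗ[ℝ] V) := {g | ∃ α ∈ R.base, g = rootRefl α}

/-- `ρ`, half the sum of the positive roots. -/
def rho : V := (2 : ℝ)⁻¹ • ∑ᶠ α ∈ R.pos, α

/-- `w_Θ`, the longest element of `W_Θ`. -/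
def wTheta (Θ : Set V) : V ≃ₗ[ℝ] V :=
  longest (parabolicSub Θ) (R.pos ∩ (Submodule.span ℝ Θ : Set V))

/-- `ρ_Θ = (1/2)(ρ - w_Θ ρ)`. -/
def rhoTheta (Θ : Set V) : V := (2 : ℝ)⁻¹ • (R.rho - R.wTheta Θ R.rho)

/-- `Σ_Θ = {α|_{a_Θ} : α ∈ Δ} ∖ {0}`. -/
def SigmaTheta (Θ : Set V) : Set V := (resTheta Θ '' R.roots) \ {0}

/-- `Σ_Θ⁺ = {α|_{a_Θ} : α ∈ Δ⁺} ∖ {0}`. -/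
def SigmaThetaPos (Θ : Set V) : Set V := (resTheta Θ '' R.pos) \ {0}

/-- `W(Θ) = {w ∈ W : wΘ = Θ}`. -/
def Wset (Θ : Set V) : Set (V ≃ₗ[ℝ] V) := {w | w ∈ R.weylGroup ∧ ⇑w '' Θ = Θ}

/-- `Δ(α)`: the roots whose restriction to `a_Θ` is a real multiple of that of `α`. -/
def rootsAlong (Θ : Set V) (α : V) : Set V :=
  {β ∈ R.roots | ∃ c : ℝ, resTheta Θ β = c • resTheta Θ α}

/-- `Δ⁺(α) = Δ(α) ∩ Δ⁺`. -/
def posAlong (Θ : Set V) (α : V) : Set V := R.rootsAlong Θ α ∩ R.pos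

/-- `W_Θ(α)`, the Weyl group of `Δ(α)`. -/
def weylAlong (Θ : Set V) (α : V) : Subgroup (V ≃ₗ[ℝ] V) :=
  Subgroup.closure {g | ∃ β ∈ R.rootsAlong Θ α, g = rootRefl β}

/-- `σ_α = w^α w_Θ`, where `w^α` is the longest element of `W_Θ(α)`. -/
def sigmaRefl (Θ : Set V) (α : V) : V ≃ₗ[ℝ] V :=
  longest (R.weylAlong Θ α) (R.posAlong Θ α) * R.wTheta Θ

/-- `α` is `Θ`-useful if `σ_α` has order two. -/
def IsUseful (Θ : Set V) (α : V) : Prop := orderOf (R.sigmaRefl Θ α) = 2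

/-- `α` is `Θ`-reduced if `α|_{a_Θ} ≠ 0` and `α = α̃`, i.e. `α` belongs to the base `Π(α)`
of `Δ⁺(α)`. -/
def IsReducedRoot (Θ : Set V) (α : V) : Prop :=
  resTheta Θ α ≠ 0 ∧ α ∈ baseOf (R.posAlong Θ α)

/-- `ʳᵘΔ_Θ⁺`, the set of `Θ`-reduced `Θ`-useful positive roots. -/
def ruPos (Θ : Set V) : Set V :=
  {α ∈ R.pos | R.IsReducedRoot Θ α ∧ R.IsUseful Θ α}

/-- `W(Θ)′`, the subgroup generated by the `σ_α` for `α ∈ ʳᵘΔ_Θ⁺`. -/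
def WThetaPrime (Θ : Set V) : Subgroup (V ≃ₗ[ℝ] V) :=
  Subgroup.closure {g | ∃ α ∈ R.ruPos Θ, g = R.sigmaRefl Θ α}

/-- `ʳᵘΣ_Θ⁺ = {α|_{a_Θ} : α ∈ ʳᵘΔ_Θ⁺}`. -/
def ruSigmaPos (Θ : Set V) : Set V := resTheta Θ '' R.ruPos Θ

/-- `ʳᵘΣ_Θ = ʳᵘΣ_Θ⁺ ∪ (−ʳᵘΣ_Θ⁺)`. -/
def ruSigma (Θ : Set V) : Set V := R.ruSigmaPos Θ ∪ (fun x => -x) '' R.ruSigmaPos Θ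

/-- `ᵘΣ_Θ`, the set of restrictions of the `Θ`-useful roots. -/
def uSigma (Θ : Set V) : Set V := resTheta Θ '' {α ∈ R.roots | R.IsUseful Θ α}

/-- `ᵘΠ_Θ`, the base of `ʳᵘΣ_Θ⁺`. -/
def uPi (Θ : Set V) : Set V := baseOf (R.ruSigmaPos Θ)

/-- `S(Θ) = {σ_γ : γ ∈ ᵘΠ_Θ}`. -/
def SThetaSet (Θ : Set V) : Set (V ≃ₗ[ℝ] V) :=
  {g | ∃ α ∈ R.ruPos Θ, resTheta Θ α ∈ R.uPi Θ ∧ g = R.sigmaRefl Θ α}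

/-- `K(Θ) = {w ∈ W : wΘ ⊆ Π}`. -/
def Kset (Θ : Set V) : Set (V ≃ₗ[ℝ] V) := {w | w ∈ R.weylGroup ∧ ⇑w '' Θ ⊆ R.base}

/-- `Θ` is normal if every simple root outside `Θ` is `Θ`-useful. -/
def IsNormal (Θ : Set V) : Prop := ∀ α ∈ R.base \ Θ, R.IsUseful Θ α

/-- `Θ` is seminormal. -/
def IsSeminormal (Θ : Set V) : Prop :=
  ∃ Ψ : Set V, Θ ⊆ Ψ ∧ Ψ ⊆ R.base ∧ R.uPi Θ = resTheta Θ '' (Ψ \ Θ)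

/-- `ξ` is integral: `⟨ξ,α∨⟩ ∈ ℤ` for all roots `α`. -/
def IsIntegral (ξ : V) : Prop := ∀ α ∈ R.roots, ∃ z : ℤ, ⟪ξ, coroot α⟫ = (z : ℝ)

/-- `ξ` is regular: `⟨ξ,α⟩ ≠ 0` for all roots `α`. -/
def IsRegular (ξ : V) : Prop := ∀ α ∈ R.roots, ⟪ξ, α⟫ ≠ 0

/-- `ξ` is dominant: `⟨ξ,α∨⟩ ≥ 0` for all positive roots `α`. -/
def IsDominant (ξ : V) : Prop := ∀ α ∈ R.pos, 0 ≤ ⟪ξ, coroot α⟫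

end RootData

/-- The length of `w` with respect to a generating set `S`. -/
def lengthWrt {G : Type*} [Group G] (S : Set G) (w : G) : ℕ :=
  sInf {k | ∃ l : List G, (∀ s ∈ l, s ∈ S) ∧ l.prod = w ∧ l.length = k}

/-- A reduced word with letters in `S`. -/
def IsReducedWordWrt {G : Type*} [Group G] (S : Set G) (l : List G) : Prop :=
  (∀ s ∈ l, s ∈ S) ∧ lengthWrt S l.prod = l.length

/-- The Bruhat order with respect to `S`: `x ≤ y` iff some reduced word for `y` contains
a subword which is a reduced word for `x`. -/
def bruhatLEWrt {G : Type*} [Group G] (S : Set G) (x y : G) : Prop :=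
  ∃ l : List G, IsReducedWordWrt S l ∧ l.prod = y ∧
    ∃ l' : List G, l'.Sublist l ∧ IsReducedWordWrt S l' ∧ l'.prod = x

/-- `(W₂,S₂)` is a quasi subsystem of `(W₁,S₁)`: `W₂` is a subgroup of `W₁`, and for every
reduced expression `w = s₁ ⋯ s_k` in `(W₂,S₂)` one has `ℓ₁(w) = ℓ₁(s₁) + ⋯ + ℓ₁(s_k)`. -/
def IsQuasiSubsystemWrt {G : Type*} [Group G] (W₁ W₂ : Subgroup G) (S₁ S₂ : Set G) : Prop :=
  W₂ ≤ W₁ ∧ ∀ l : List G, (∀ s ∈ l, s ∈ S₂) → lengthWrt S₂ l.prod = l.length →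
    lengthWrt S₁ l.prod = (l.map (lengthWrt S₁)).sum


/-!
Write `λ = ρ_Θ + μ`. The longest element `w_Θ` fixes `μ`, negates `ρ_Θ` and permutes
`Δ⁺ ∖ span Θ`, so `⟨λ, β⟩ + ⟨λ, w_Θ⁻¹ β⟩ = 2⟨μ, β⟩` for such `β`; this gives one direction.
Conversely, `⟨λ, θ∨⟩ = 1` for `θ ∈ Θ` makes `λ` nonnegative on `Δ⁺ ∩ span Θ`. If `λ` were negative
somewhere on `Δ⁺ ∖ span Θ`, pick such a `β` with `⟨λ, β⟩` maximal. If `⟨β, θ⟩ ≥ 0` for all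
`θ ∈ Θ`, then `⟨ρ_Θ, β⟩ ≥ 0` and `⟨μ, β⟩ > 0` give a contradiction. Otherwise `s_θ β` lies in
`Δ⁺ ∖ span Θ` and has a larger pairing with `λ` for some `θ ∈ Θ`, and a rank-two computation with
integrality and regularity shows that this pairing is still negative.
-/

lemma Function.Involutive.image_eq_of_mapsTo {α : Type*} {f : α → α} {s : Set α}
    (hf : Function.Involutive f) (h : Set.MapsTo f s s) : f '' s = s :=
  h.image_subset.antisymm fun x hx => ⟨f x, h hx, hf x⟩

lemma map_finsum_mem_id_eq_finsum_mem_image {M N F : Type*} [AddCommMonoid M] [AddCommMonoid N]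
    [FunLike F M N] [AddMonoidHomClass F M N] (g : F) (hg : Function.Injective g) {s : Set M}
    (hs : s.Finite) : g (∑ᶠ x ∈ s, x) = ∑ᶠ y ∈ g '' s, y := by
  rw [finsum_mem_image hg.injOn]
  exact AddMonoidHom.map_finsum_mem _ (g : M →+ N) hs

lemma exists_nonneg_supported_of_mem_closure {M : Type*} [AddCommMonoid M] [Module ℝ M]
    {s : Set M} {β : M} (hβ : β ∈ AddSubmonoid.closure s) :
    ∃ f ∈ Finsupp.supported ℝ ℝ s, 0 ≤ f ∧ Finsupp.linearCombination ℝ id f = β := by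
  induction hβ using AddSubmonoid.closure_induction with
  | mem x hx =>
    exact ⟨Finsupp.single x 1, Finsupp.single_mem_supported ℝ 1 hx,
      Finsupp.single_nonneg.mpr zero_le_one, by simp⟩
  | zero => exact ⟨0, Submodule.zero_mem _, le_rfl, map_zero _⟩
  | add x y _ _ ihx ihy =>
    obtain ⟨f, hfs, hf0, rfl⟩ := ihx
    obtain ⟨g, hgs, hg0, rfl⟩ := ihy
    exact ⟨f + g, Submodule.add_mem _ hfs hgs, add_nonneg hf0 hg0, map_add _ _ _⟩

section InnerProduct

variable {E : Type*} [NormedAddCommGroup E] [InnerProductSpace ℝ E]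

lemma real_inner_mul_inner_self_lt_of_notMem_span {x y : E} (hx : x ≠ 0) (hy : y ∉ ℝ ∙ x) :
    ⟪x, y⟫ * ⟪x, y⟫ < ⟪x, x⟫ * ⟪y, y⟫ := by
  refine (real_inner_mul_inner_self_le x y).lt_of_ne fun h => ?_
  have hnorm : ‖⟪x, y⟫‖ = ‖x‖ * ‖y‖ := by
    rw [Real.norm_eq_abs, ← sq_eq_sq₀ (abs_nonneg _) (by positivity), sq_abs, mul_pow,
      ← real_inner_self_eq_norm_sq, ← real_inner_self_eq_norm_sq, sq, h]
  have hcs := (norm_inner_eq_norm_tfae ℝ x y).out 0 3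
  exact hy ((hcs.mp hnorm).resolve_left hx)

lemma inner_coroot_right (x α : E) : ⟪x, coroot α⟫ = 2 / ⟪α, α⟫ * ⟪x, α⟫ :=
  real_inner_smul_right _ _ _

lemma inner_coroot_eq_iff {x α : E} (hα : α ≠ 0) {c : ℝ} :
    ⟪x, coroot α⟫ = c ↔ c * ⟪α, α⟫ = 2 * ⟪x, α⟫ := by
  have hαα : ⟪α, α⟫ ≠ 0 := (real_inner_self_pos.mpr hα).ne'
  rw [inner_coroot_right, div_mul_eq_mul_div, div_eq_iff hαα, eq_comm]

lemma inner_coroot_nonneg_iff {x α : E} (hα : α ≠ 0) : 0 ≤ ⟪x, coroot α⟫ ↔ 0 ≤ ⟪x, α⟫ := by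
  have : 0 < 2 / ⟪α, α⟫ := div_pos two_pos (real_inner_self_pos.mpr hα)
  rw [inner_coroot_right, mul_nonneg_iff_of_pos_left this]

lemma rootRefl_apply (α x : E) : rootRefl α x = x - ⟪x, coroot α⟫ • α := by
  change (ℝ ∙ α)ᗮ.reflection x = _
  rw [Submodule.reflection_orthogonal_apply, Submodule.reflection_singleton_apply,
    inner_coroot_right, RCLike.ofReal_real_eq_id, id, ← real_inner_self_eq_norm_sq,
    real_inner_comm, two_smul, ← add_smul, neg_sub]
  congr 2
  ring

lemma inner_rootRefl_rootRefl (α x y : E) : ⟪rootRefl α x, rootRefl α y⟫ = ⟪x, y⟫ :=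
  (ℝ ∙ α)ᗮ.reflection.inner_map_map x y

lemma rootRefl_involutive (α : E) : Function.Involutive (rootRefl α) :=
  (ℝ ∙ α)ᗮ.reflection_involutive

lemma rootRefl_self (α : E) : rootRefl α α = -α :=
  Submodule.reflection_orthogonalComplement_singleton_eq_neg α

lemma rootRefl_apply_of_inner_eq_zero {α x : E} (h : ⟪x, α⟫ = 0) : rootRefl α x = x := by
  rw [rootRefl_apply, inner_coroot_right, h, mul_zero, zero_smul, sub_zero]

lemma inner_eq_zero_of_rootRefl_eq_self {α x : E} (h : rootRefl α x = x) : ⟪x, α⟫ = 0 := by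
  have := inner_rootRefl_rootRefl α x α
  rw [h, rootRefl_self, inner_neg_right] at this
  linarith

lemma rootRefl_mem_iff {K : Submodule ℝ E} {α x : E} (hα : α ∈ K) :
    rootRefl α x ∈ K ↔ x ∈ K := by
  rw [rootRefl_apply, K.sub_mem_iff_left (K.smul_mem _ hα)]

end InnerProduct

lemma longest_isLongest {E : Type*} [NormedAddCommGroup E] [InnerProductSpace ℝ E]
    {H : Subgroup (E ≃ₗ[ℝ] E)} {P : Set E} (h : ∃ w, IsLongest H P w) :
    IsLongest H P (longest H P) := by
  rw [longest, dif_pos h]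
  exact h.choose_spec

namespace RootData

variable {E : Type*} [NormedAddCommGroup E] [InnerProductSpace ℝ E]

def parabolicStabilizer (R : RootData E) (Θ : Set E) : Subgroup (E ≃ₗ[ℝ] E) where
  carrier := {w | (∀ x y, ⟪w x, w y⟫ = ⟪x, y⟫) ∧ (∀ x ∈ aTheta Θ, w x = x) ∧
    w '' (R.pos \ Submodule.span ℝ Θ) = R.pos \ Submodule.span ℝ Θ}
  mul_mem' := by
    rintro w v ⟨hw₁, hw₂, hw₃⟩ ⟨hv₁, hv₂, hv₃⟩
    refine ⟨fun x y => (hw₁ _ _).trans (hv₁ x y), fun x hx => ?_, ?_⟩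
    · change w (v x) = x
      rw [hv₂ x hx, hw₂ x hx]
    · change w ∘ v '' _ = _
      rw [Set.image_comp, hv₃, hw₃]
  one_mem' := ⟨fun _ _ => rfl, fun _ _ => rfl, Set.image_id _⟩
  inv_mem' := by
    rintro w ⟨h₁, h₂, h₃⟩
    have hinv : ∀ x, w (w⁻¹ x) = x := fun x => w.apply_symm_apply x
    refine ⟨fun x y => ?_, fun x hx => ?_, ?_⟩
    · rw [← h₁, hinv, hinv]
    · conv_lhs => rw [← h₂ x hx]
      exact w.symm_apply_apply x
    · conv_lhs => rw [← h₃]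
      rw [← Set.image_comp]
      convert Set.image_id _
      ext x
      exact w.symm_apply_apply x

variable {R : RootData E}

namespace IsRootSystem

lemma ne_zero (hR : R.IsRootSystem) {α : E} (hα : α ∈ R.roots) : α ≠ 0 :=
  fun h => hR.zero_not_mem (h ▸ hα)

lemma neg_mem_pos (hR : R.IsRootSystem) {α : E} (hα : α ∈ R.roots) (h : α ∉ R.pos) :
    -α ∈ R.pos :=
  not_not.mp fun h' => h ((hR.pos_iff_neg_not_mem α hα).mpr h')

lemma pos_finite (hR : R.IsRootSystem) : R.pos.Finite :=
  hR.finite.subset hR.pos_subset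

lemma exists_nonneg_coeffs (hR : R.IsRootSystem) {β : E} (hβ : β ∈ R.pos) :
    ∃ f ∈ Finsupp.supported ℝ ℝ R.base, 0 ≤ f ∧ Finsupp.linearCombination ℝ id f = β :=
  exists_nonneg_supported_of_mem_closure (hR.pos_mem_closure β hβ)

lemma rootRefl_mem_pos (hR : R.IsRootSystem) {θ β : E} (hθ : θ ∈ R.base) (hβ : β ∈ R.pos)
    (hne : β ≠ θ) : rootRefl θ β ∈ R.pos := by
  have hθr : θ ∈ R.roots := hR.pos_subset (hR.base_subset hθ)
  by_contra hneg
  have hγ := hR.neg_mem_pos (hR.reflect_mem θ hθr β (hR.pos_subset hβ)) hneg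
  obtain ⟨f, hfs, hf0, hf⟩ := hR.exists_nonneg_coeffs hβ
  obtain ⟨g, hgs, hg0, hg⟩ := hR.exists_nonneg_coeffs hγ
  -- the nonnegative coefficient vectors of `β` and `-s_θ β` add up to that of `⟨β, θ∨⟩ θ`
  have hsum : f + g = Finsupp.single θ ⟪β, coroot θ⟫ := by
    refine (linearIndepOn_iffₛ (v := id) (s := R.base)).mp hR.base_indep _
      (Submodule.add_mem _ hfs hgs) _ (Finsupp.single_mem_supported ℝ _ hθ) ?_
    rw [map_add, hf, hg, Finsupp.linearCombination_single, rootRefl_apply, id]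
    abel
  have hfθ : f = Finsupp.single θ (f θ) := by
    refine Finsupp.support_subset_singleton.mp fun b hb => Finset.mem_singleton.mpr ?_
    by_contra hbθ
    have hfg : f b + g b = 0 := by
      rw [← Finsupp.add_apply, hsum, Finsupp.single_eq_of_ne hbθ]
    have hfb : 0 ≤ f b := hf0 b
    have hgb : 0 ≤ g b := hg0 b
    exact Finsupp.mem_support_iff.mp hb (by linarith)
  have hβθ : β = f θ • θ := by
    rw [← hf, hfθ, Finsupp.linearCombination_single, id, Finsupp.single_eq_same]
  rcases hR.reduced θ hθr (f θ) (hβθ ▸ hR.pos_subset hβ) with h1 | h1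
  · exact hne (by rw [hβθ, h1, one_smul])
  · have : 0 ≤ f θ := hf0 θ
    linarith

variable {Θ : Set E}

lemma inner_nonneg_of_mem_pos_of_mem_span (hR : R.IsRootSystem) (hΘ : Θ ⊆ R.base) {β x : E}
    (hβ : β ∈ R.pos) (hsp : β ∈ Submodule.span ℝ Θ) (hx : ∀ θ ∈ Θ, 0 ≤ ⟪x, θ⟫) :
    0 ≤ ⟪x, β⟫ := by
  obtain ⟨f, hfs, hf0, hf⟩ := hR.exists_nonneg_coeffs hβ
  obtain ⟨g, hgs, hg⟩ := Submodule.mem_span_set.mp hsp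
  have hfg : f = g := (linearIndepOn_iffₛ (v := id) (s := R.base)).mp hR.base_indep _ hfs _
    ((Finsupp.mem_supported ℝ g).mpr (hgs.trans hΘ)) (hf.trans hg.symm)
  rw [← hf, Finsupp.linearCombination_apply, Finsupp.sum, inner_sum]
  refine Finset.sum_nonneg fun b hb => ?_
  rw [id, real_inner_smul_right]
  exact mul_nonneg (hf0 b) (hx b (hgs (hfg ▸ hb)))

lemma rootRefl_mapsTo_pos_sdiff_span (hR : R.IsRootSystem) (hΘ : Θ ⊆ R.base) {θ : E}
    (hθ : θ ∈ Θ) :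
    Set.MapsTo (rootRefl θ) (R.pos \ Submodule.span ℝ Θ) (R.pos \ Submodule.span ℝ Θ) :=
  fun _ ⟨hβ, hsp⟩ => ⟨hR.rootRefl_mem_pos (hΘ hθ) hβ fun h => hsp (h ▸ Submodule.subset_span hθ),
    fun h => hsp ((rootRefl_mem_iff (Submodule.subset_span hθ)).mp h)⟩

lemma parabolicSub_le (hR : R.IsRootSystem) (hΘ : Θ ⊆ R.base) :
    parabolicSub Θ ≤ R.parabolicStabilizer Θ := by
  refine Subgroup.closure_le _ |>.mpr ?_
  rintro _ ⟨θ, hθ, rfl⟩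
  refine ⟨inner_rootRefl_rootRefl θ, fun x hx => rootRefl_apply_of_inner_eq_zero ?_,
    (rootRefl_involutive θ).image_eq_of_mapsTo (hR.rootRefl_mapsTo_pos_sdiff_span hΘ hθ)⟩
  exact (Submodule.mem_orthogonal' _ x).mp hx θ (Submodule.subset_span hθ)

/-- `wTheta` falls back to the junk value `1` when no longest element exists; then `ρ_Θ = 0`, and
regularity of `ρ_Θ + μ` with `μ ⊥ Θ` forces `Θ = ∅`, where `1` is longest. -/
lemma isLongest_wTheta (hR : R.IsRootSystem) (hΘ : Θ ⊆ R.base) {μ : E} (hμ : μ ∈ aTheta Θ)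
    (hreg : R.IsRegular (R.rhoTheta Θ + μ)) :
    IsLongest (parabolicSub Θ) (R.pos ∩ Submodule.span ℝ Θ) (R.wTheta Θ) := by
  by_cases h : ∃ w, IsLongest (parabolicSub Θ) (R.pos ∩ Submodule.span ℝ Θ) w
  · exact longest_isLongest h
  have hρ : R.rhoTheta Θ = 0 := by simp [rhoTheta, wTheta, longest, dif_neg h]
  have hΘe : Θ = ∅ := Set.eq_empty_of_forall_notMem fun θ hθ =>
    hreg θ (hR.pos_subset (hR.base_subset (hΘ hθ))) (by
      rw [hρ, zero_add]
      exact Submodule.inner_left_of_mem_orthogonal (Submodule.subset_span hθ) hμ)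
  refine absurd ⟨1, one_mem _, ?_⟩ h
  have hP : R.pos ∩ (Submodule.span ℝ Θ : Set E) = ∅ := by
    rw [hΘe, Submodule.span_empty, Submodule.bot_coe, Set.eq_empty_iff_forall_notMem]
    rintro _ ⟨hpos, rfl⟩
    exact hR.zero_not_mem (hR.pos_subset hpos)
  simp [hP]

lemma map_finsum_pos_inter_span_of_isLongest (hR : R.IsRootSystem) {w : E ≃ₗ[ℝ] E}
    (hw : IsLongest (parabolicSub Θ) (R.pos ∩ Submodule.span ℝ Θ) w) :
    w (∑ᶠ β ∈ R.pos ∩ Submodule.span ℝ Θ, β) = -∑ᶠ β ∈ R.pos ∩ Submodule.span ℝ Θ, β := by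
  have hfin := hR.pos_finite.inter_of_left (Submodule.span ℝ Θ : Set E)
  rw [map_finsum_mem_id_eq_finsum_mem_image w w.injective hfin, hw.2,
    finsum_mem_image neg_injective.injOn, finsum_mem_neg_distrib _ hfin]

variable (hR : R.IsRootSystem) (hΘ : Θ ⊆ R.base)
  (hw : IsLongest (parabolicSub Θ) (R.pos ∩ Submodule.span ℝ Θ) (R.wTheta Θ))
include hR hΘ hw

lemma rhoTheta_eq : R.rhoTheta Θ = (2 : ℝ)⁻¹ • ∑ᶠ β ∈ R.pos ∩ Submodule.span ℝ Θ, β := by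
  have hQ : R.wTheta Θ (∑ᶠ β ∈ R.pos \ Submodule.span ℝ Θ, β) =
      ∑ᶠ β ∈ R.pos \ Submodule.span ℝ Θ, β := by
    rw [map_finsum_mem_id_eq_finsum_mem_image _ (R.wTheta Θ).injective hR.pos_finite.sdiff,
      (hR.parabolicSub_le hΘ hw.1).2.2]
  rw [rhoTheta, rho, ← finsum_mem_inter_add_sdiff (Submodule.span ℝ Θ : Set E) hR.pos_finite,
    map_smul, map_add, hR.map_finsum_pos_inter_span_of_isLongest hw, hQ]
  module

lemma wTheta_rhoTheta : R.wTheta Θ (R.rhoTheta Θ) = -R.rhoTheta Θ := by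
  rw [hR.rhoTheta_eq hΘ hw, map_smul, hR.map_finsum_pos_inter_span_of_isLongest hw, smul_neg]

lemma inner_rhoTheta_coroot {θ : E} (hθ : θ ∈ Θ) : ⟪R.rhoTheta Θ, coroot θ⟫ = 1 := by
  set P := R.pos ∩ (Submodule.span ℝ Θ : Set E)
  have hθpos : θ ∈ R.pos := hR.base_subset (hΘ hθ)
  have hθr : θ ∈ R.roots := hR.pos_subset hθpos
  have hmaps : Set.MapsTo (rootRefl θ) (P \ {θ}) (P \ {θ}) := by
    rintro β ⟨⟨hβ, hsp⟩, hβθ⟩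
    refine ⟨⟨hR.rootRefl_mem_pos (hΘ hθ) hβ hβθ,
      (rootRefl_mem_iff (Submodule.subset_span hθ)).mpr hsp⟩, fun h => ?_⟩
    have hβ' : β = -θ := by
      rw [← rootRefl_involutive θ β, Set.mem_singleton_iff.mp h, rootRefl_self]
    exact (hR.pos_iff_neg_not_mem θ hθr).mp hθpos (hβ' ▸ hβ)
  have hfin : (P \ {θ}).Finite := (hR.pos_finite.inter_of_left _).sdiff
  have hfix : rootRefl θ (∑ᶠ β ∈ P \ {θ}, β) = ∑ᶠ β ∈ P \ {θ}, β := by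
    rw [map_finsum_mem_id_eq_finsum_mem_image _ (rootRefl θ).injective hfin,
      (rootRefl_involutive θ).image_eq_of_mapsTo hmaps]
  have hsum : ∑ᶠ β ∈ P, β = θ + ∑ᶠ β ∈ P \ {θ}, β := by
    rw [← finsum_mem_insert (fun β => β) (fun h => h.2 rfl) hfin, Set.insert_sdiff_singleton,
      Set.insert_eq_of_mem (show θ ∈ P from ⟨hθpos, Submodule.subset_span hθ⟩)]
  rw [inner_coroot_eq_iff (hR.ne_zero hθr), hR.rhoTheta_eq hΘ hw, hsum, real_inner_smul_left,
    inner_add_left, inner_eq_zero_of_rootRefl_eq_self hfix]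
  ring

lemma inner_rhoTheta_nonneg {x : E} (hx : ∀ θ ∈ Θ, 0 ≤ ⟪x, θ⟫) : 0 ≤ ⟪R.rhoTheta Θ, x⟫ := by
  have hfin := hR.pos_finite.inter_of_left (Submodule.span ℝ Θ : Set E)
  rw [hR.rhoTheta_eq hΘ hw, real_inner_smul_left, finsum_mem_eq_finite_toFinset_sum _ hfin,
    sum_inner]
  refine mul_nonneg (by norm_num) (Finset.sum_nonneg fun β hβ => ?_)
  rw [Set.Finite.mem_toFinset] at hβ
  rw [real_inner_comm]
  exact hR.inner_nonneg_of_mem_pos_of_mem_span hΘ hβ.1 hβ.2 hx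

end IsRootSystem

lemma IsRootSystem.inner_rootRefl_neg (hR : R.IsRootSystem) {l θ β : E} (hθ : θ ∈ R.roots)
    (hβ : β ∈ R.roots) (hβθ : β ∉ ℝ ∙ θ) (hθβ : ⟪β, θ⟫ < 0) (hreg : R.IsRegular l)
    (hint : R.IsIntegral l) (hlθ : ⟪l, coroot θ⟫ = 1) (hlβ : ⟪l, β⟫ < 0) :
    ⟪l, rootRefl θ β⟫ < 0 := by
  have hθ0 := hR.ne_zero hθ
  have hβ0 := hR.ne_zero hβ
  have hθθ : 0 < ⟪θ, θ⟫ := real_inner_self_pos.mpr hθ0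
  have hββ : 0 < ⟪β, β⟫ := real_inner_self_pos.mpr hβ0
  obtain ⟨a, ha⟩ := hR.crystallographic θ hθ β hβ
  obtain ⟨b, hb⟩ := hR.crystallographic β hβ θ hθ
  obtain ⟨k, hk⟩ := hint β hβ
  have hsθβ : rootRefl θ β = β - (a : ℝ) • θ := by rw [rootRefl_apply, ha]
  have hsβθ : rootRefl β θ = θ - (b : ℝ) • β := by rw [rootRefl_apply, hb]
  rw [eq_comm, inner_coroot_eq_iff hθ0] at ha
  rw [eq_comm, inner_coroot_eq_iff hβ0, real_inner_comm β θ] at hb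
  rw [inner_coroot_eq_iff hβ0] at hk
  rw [inner_coroot_eq_iff hθ0, one_mul] at hlθ
  have ha0 : a ≤ -1 := by
    have : (a : ℝ) < 0 := neg_of_mul_neg_left (by linarith) hθθ.le
    have : a < 0 := by exact_mod_cast this
    omega
  have hb0 : b ≤ -1 := by
    have : (b : ℝ) < 0 := neg_of_mul_neg_left (by linarith) hββ.le
    have : b < 0 := by exact_mod_cast this
    omega
  have hk0 : k ≤ -1 := by
    have : (k : ℝ) < 0 := neg_of_mul_neg_left (by linarith) hββ.le
    have : k < 0 := by exact_mod_cast this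
    omega
  have hab : a * b < 4 := by
    have hcs := real_inner_mul_inner_self_lt_of_notMem_span hθ0 hβθ
    rw [real_inner_comm β θ] at hcs
    have hprod : (a * b : ℝ) * (⟪θ, θ⟫ * ⟪β, β⟫) = 4 * (⟪β, θ⟫ * ⟪β, θ⟫) := by
      linear_combination (b * ⟪β, β⟫) * ha + (2 * ⟪β, θ⟫) * hb
    have : (a * b : ℝ) < 4 := by
      by_contra! h4
      nlinarith [mul_pos hθθ hββ]
    exact_mod_cast this
  have hsθβ_inner : 2 * ⟪l, rootRefl θ β⟫ = (k - b) * ⟪β, β⟫ := by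
    rw [hsθβ, inner_sub_right, real_inner_smul_right]
    linear_combination -hk + a * hlθ - ha + hb
  rw [← mul_lt_mul_iff_of_pos_left two_pos, mul_zero, hsθβ_inner]
  refine mul_neg_of_neg_of_pos ?_ hββ
  by_contra! hbk
  have hbk' : b < k := by
    have : b ≤ k := by exact_mod_cast sub_nonneg.mp hbk
    refine lt_of_le_of_ne this fun h => hreg _ (hR.reflect_mem θ hθ β hβ) ?_
    rw [h, sub_self, zero_mul] at hsθβ_inner
    linarith
  -- crossing zero forces type `B₂` or `G₂`, where `l` turns out orthogonal to a root
  have ha1 : a = -1 := by nlinarith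
  subst ha1
  have hcases : k = -1 ∨ k = -2 ∧ b = -3 := by omega
  rcases hcases with rfl | ⟨rfl, rfl⟩
  · refine hreg _ (hR.reflect_mem β hβ θ hθ) ?_
    rw [hsβθ, inner_sub_right, real_inner_smul_right]
    push_cast at ha hk
    linear_combination (-1 / 2 : ℝ) * hlθ + (b / 2 : ℝ) * hk - (1 / 2 : ℝ) * ha + (1 / 2 : ℝ) * hb
  · refine hreg _ (hR.reflect_mem θ hθ _ (hR.reflect_mem β hβ θ hθ)) ?_
    rw [hsβθ, map_sub, map_smul, rootRefl_self, hsθβ]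
    simp only [inner_sub_right, inner_neg_right, real_inner_smul_right]
    push_cast at ha hb hk ⊢
    linear_combination -hlθ - (3 / 2 : ℝ) * hk - ha + hb

lemma IsDominant.inner_pos (hR : R.IsRootSystem) {l : E} (hdom : R.IsDominant l)
    (hreg : R.IsRegular l) {α : E} (hα : α ∈ R.pos) : 0 < ⟪l, α⟫ :=
  ((inner_coroot_nonneg_iff (hR.ne_zero (hR.pos_subset hα))).mp (hdom α hα)).lt_of_ne'
    (hreg α (hR.pos_subset hα))

variable {Θ : Set E}

lemma IsRootSystem.isDominant_of_inner_coroot_eq_one (hR : R.IsRootSystem) (hΘ : Θ ⊆ R.base)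
    {l : E} (hreg : R.IsRegular l) (hint : R.IsIntegral l)
    (hlΘ : ∀ θ ∈ Θ, ⟪l, coroot θ⟫ = 1)
    (hl : ∀ β ∈ R.pos \ Submodule.span ℝ Θ, (∀ θ ∈ Θ, 0 ≤ ⟪β, θ⟫) → 0 < ⟪l, β⟫) :
    R.IsDominant l := by
  have hθr : ∀ θ ∈ Θ, θ ∈ R.roots := fun θ hθ => hR.pos_subset (hR.base_subset (hΘ hθ))
  have hlθ : ∀ θ ∈ Θ, 0 < ⟪l, θ⟫ := fun θ hθ => by
    have := (inner_coroot_eq_iff (hR.ne_zero (hθr θ hθ))).mp (hlΘ θ hθ)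
    linarith [real_inner_self_pos.mpr (hR.ne_zero (hθr θ hθ))]
  have hoff : ∀ β ∈ R.pos \ Submodule.span ℝ Θ, 0 < ⟪l, β⟫ := by
    by_contra! h
    obtain ⟨β, ⟨hβ, hlβ⟩, hmax⟩ := Set.exists_max_image
      {β ∈ R.pos \ Submodule.span ℝ Θ | ⟪l, β⟫ < 0} (fun β => ⟪l, β⟫)
      (hR.pos_finite.sdiff.subset fun _ h => h.1)
      (by
        obtain ⟨β, hβ, hle⟩ := h
        exact ⟨β, hβ, hle.lt_of_ne (hreg β (hR.pos_subset hβ.1))⟩)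
    by_cases hβΘ : ∀ θ ∈ Θ, 0 ≤ ⟪β, θ⟫
    · exact (hl β hβ hβΘ).not_gt hlβ
    push Not at hβΘ
    obtain ⟨θ, hθ, hβθ⟩ := hβΘ
    -- `s_θ β` stays in `Δ⁺ ∖ span Θ`, keeps `l` negative, and increases it
    have hβθ' : β ∉ ℝ ∙ θ := fun h => hβ.2 (Submodule.span_mono (Set.singleton_subset_iff.mpr hθ) h)
    have hle := hmax _ ⟨hR.rootRefl_mapsTo_pos_sdiff_span hΘ hθ hβ,
      hR.inner_rootRefl_neg (hθr θ hθ) (hR.pos_subset hβ.1) hβθ' hβθ hreg hint (hlΘ θ hθ) hlβ⟩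
    have hcor : ⟪β, coroot θ⟫ < 0 := by
      rw [inner_coroot_right]
      exact mul_neg_of_pos_of_neg (div_pos two_pos
        (real_inner_self_pos.mpr (hR.ne_zero (hθr θ hθ)))) hβθ
    simp only [rootRefl_apply, inner_sub_right, real_inner_smul_right] at hle
    nlinarith [hlθ θ hθ]
  intro α hα
  rw [inner_coroot_nonneg_iff (hR.ne_zero (hR.pos_subset hα))]
  by_cases hsp : α ∈ Submodule.span ℝ Θ
  · exact hR.inner_nonneg_of_mem_pos_of_mem_span hΘ hα hsp fun θ hθ => (hlθ θ hθ).le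
  · exact (hoff α ⟨hα, hsp⟩).le

lemma IsRootSystem.inner_pos_of_isDominant_rhoTheta_add (hR : R.IsRootSystem) (hΘ : Θ ⊆ R.base)
    (hw : IsLongest (parabolicSub Θ) (R.pos ∩ Submodule.span ℝ Θ) (R.wTheta Θ)) {μ : E}
    (hμ : μ ∈ aTheta Θ) (hreg : R.IsRegular (R.rhoTheta Θ + μ))
    (hdom : R.IsDominant (R.rhoTheta Θ + μ)) {β : E} (hβ : β ∈ R.pos \ Submodule.span ℝ Θ) :
    0 < ⟪μ, β⟫ := by
  obtain ⟨hiso, hfix, himage⟩ := hR.parabolicSub_le hΘ hw.1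
  set w := R.wTheta Θ
  have hβ' : w.symm β ∈ R.pos \ Submodule.span ℝ Θ := by
    rw [← himage] at hβ
    obtain ⟨γ, hγ, rfl⟩ := hβ
    rwa [w.symm_apply_apply]
  have hwl : w (R.rhoTheta Θ + μ) = μ - R.rhoTheta Θ := by
    rw [map_add, hR.wTheta_rhoTheta hΘ hw, hfix μ hμ]
    abel
  have hsum : ⟪R.rhoTheta Θ + μ, β⟫ + ⟪R.rhoTheta Θ + μ, w.symm β⟫ = 2 * ⟪μ, β⟫ := by
    rw [← hiso (R.rhoTheta Θ + μ) (w.symm β), w.apply_symm_apply, hwl]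
    simp only [inner_add_left, inner_sub_left]
    ring
  linarith [hdom.inner_pos hR hreg hβ.1, hdom.inner_pos hR hreg hβ'.1]

end RootData

lemma resTheta_eq_zero_iff {Θ : Set V} {β : V} : resTheta Θ β = 0 ↔ β ∈ Submodule.span ℝ Θ := by
  rw [resTheta, ZeroMemClass.coe_eq_zero, Submodule.orthogonalProjectionOnto_eq_zero_iff, aTheta,
    Submodule.orthogonal_orthogonal]

lemma inner_resTheta {Θ : Set V} {μ : V} (hμ : μ ∈ aTheta Θ) (β : V) :
    ⟪μ, resTheta Θ β⟫ = ⟪μ, β⟫ := by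
  rw [resTheta, ← Submodule.starProjection_apply, ← Submodule.inner_starProjection_left_eq_right,
    Submodule.starProjection_eq_self_iff.mpr hμ]

lemma RootData.forall_mem_SigmaThetaPos_iff {R : RootData V} {Θ : Set V} {μ : V}
    (hμ : μ ∈ aTheta Θ) :
    (∀ γ ∈ R.SigmaThetaPos Θ, 0 < ⟪μ, γ⟫) ↔ ∀ β ∈ R.pos \ Submodule.span ℝ Θ, 0 < ⟪μ, β⟫ := by
  simp only [SigmaThetaPos, Set.mem_sdiff, Set.mem_image, Set.mem_singleton_iff, and_imp,
    forall_exists_index, SetLike.mem_coe]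
  refine ⟨fun h β hβ hsp => ?_, ?_⟩
  · rw [← inner_resTheta hμ]
    exact h _ β hβ rfl (resTheta_eq_zero_iff.not.mpr hsp)
  · rintro h _ β hβ rfl hne
    rw [inner_resTheta hμ]
    exact h β hβ (resTheta_eq_zero_iff.not.mp hne)

theorem dominant_iff_pos_on_SigmaThetaPos_general (R : RootData V) (hR : R.IsRootSystem)
    (Θ : Set V) (hΘ : Θ ⊆ R.base)
    (μ : V) (hμ : μ ∈ aTheta Θ)
    (hreg : R.IsRegular (R.rhoTheta Θ + μ)) (hint : R.IsIntegral (R.rhoTheta Θ + μ)) :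
    R.IsDominant (R.rhoTheta Θ + μ) ↔ ∀ γ ∈ R.SigmaThetaPos Θ, 0 < ⟪μ, γ⟫ := by
  have hw := hR.isLongest_wTheta hΘ hμ hreg
  rw [R.forall_mem_SigmaThetaPos_iff hμ]
  refine ⟨fun hdom β hβ => hR.inner_pos_of_isDominant_rhoTheta_add hΘ hw hμ hreg hdom hβ,
    fun hpos => hR.isDominant_of_inner_coroot_eq_one hΘ hreg hint (fun θ hθ => ?_)
      (fun β hβ hβΘ => ?_)⟩
  · rw [inner_add_left, hR.inner_rhoTheta_coroot hΘ hw hθ, coroot, real_inner_smul_right,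
      Submodule.inner_left_of_mem_orthogonal (Submodule.subset_span hθ) hμ, mul_zero, add_zero]
  · rw [inner_add_left]
    exact add_pos_of_nonneg_of_pos (hR.inner_rhoTheta_nonneg hΘ hw hβΘ) (hpos β hβ)

/-- Lemma 2.4.3: `ρ_Θ + μ` (regular integral) is dominant iff `⟨μ,γ⟩ > 0` for all
`γ ∈ Σ_Θ⁺`. -/
theorem dominant_iff_pos_on_SigmaThetaPos (R : RootData V) (hR : R.IsRootSystem)
    (Θ : Set V) (hΘ : Θ ⊆ R.base) (hne : Θ ≠ R.base)
    (μ : V) (hμ : μ ∈ aTheta Θ)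
    (hreg : R.IsRegular (R.rhoTheta Θ + μ)) (hint : R.IsIntegral (R.rhoTheta Θ + μ)) :
    R.IsDominant (R.rhoTheta Θ + μ) ↔ ∀ γ ∈ R.SigmaThetaPos Θ, 0 < ⟪μ, γ⟫ :=
  dominant_iff_pos_on_SigmaThetaPos_general R hR Θ hΘ μ hμ hreg hint
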